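/- arXiv:2601.20344 — 2 statements merged into one kernel-verified Lean document; each statement's English description precedes it below -/
import Mathlib

section
/- The alternating sum ∑_{j=0}^k (-1)^k C(k,j) k! / ((-m)_j (-n)_{k-j}) evaluates to k! · (m+n-k+1)(m+n-k)⋯(m+n-2k+2) / (m(m-1)⋯(m-k+1) · n(n-1)⋯(n-k+1)); equivalently, via Gauss' summation, C(n,k)^{-1} ∑_{j=0}^k (-k)_j (n-k+1)_j / ((-m)_j j!) = k! (m+n-k+1)_k^- / ((m)_k^- (n)_k^-). -/
/-- Rising Pochhammer symbol `(x)_j = x(x+1)⋯(x+j-1)`. -/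
noncomputable def poch (x : ℚ) (j : ℕ) : ℚ := ∏ i ∈ Finset.range j, (x + i)

/-- Falling factorial `(x)_k^- = x(x-1)⋯(x-k+1)`. -/
noncomputable def fall (x : ℚ) (k : ℕ) : ℚ := ∏ i ∈ Finset.range k, (x - i)

open Finset Nat

private lemma hockey (b k : ℕ) : ∑ j ∈ range (k+1), (b+j).choose j = (b+k+1).choose k := by
  induction k with
  | zero => simp
  | succ k ih =>
    rw [Finset.sum_range_succ, ih, show b + (k+1) + 1 = (b+k+1) + 1 from by omega,
      Nat.choose_succ_succ', show b + (k+1) = b+k+1 from by omega]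

private lemma convId (b : ℕ) : ∀ a k : ℕ,
    ∑ j ∈ range (k+1), (a+j).choose j * (b+(k-j)).choose (k-j) = (a+b+k+1).choose k := by
  intro a
  induction a with
  | zero =>
    intro k
    have h1 : ∑ j ∈ range (k+1), (0+j).choose j * (b+(k-j)).choose (k-j)
        = ∑ j ∈ range (k+1), (b+(k-j)).choose (k-j) := by
      refine Finset.sum_congr rfl fun j _ => ?_
      simp
    have h2 : ∑ j ∈ range (k+1), (b+(k-j)).choose (k-j)
        = ∑ j ∈ range (k+1), (b+j).choose j := by
      have := Finset.sum_range_reflect (fun i => (b+i).choose i) (k+1)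
      simpa using this
    rw [h1, h2, hockey]
    congr 1
    omega
  | succ a ih =>
    intro k
    induction k with
    | zero => simp
    | succ k ihk =>
      rw [Finset.sum_range_succ']
      have split : ∀ i ∈ range (k+1),
          (a+1+(i+1)).choose (i+1) * (b+(k+1-(i+1))).choose (k+1-(i+1))
            = (a+1+i).choose i * (b+(k-i)).choose (k-i)
              + (a+(i+1)).choose (i+1) * (b+(k+1-(i+1))).choose (k+1-(i+1)) := by
        intro i _
        rw [show k+1-(i+1) = k - i from by omega, show a+(i+1) = a+1+i from by omega,
          show a+1+(i+1) = (a+1+i) + 1 from by omega, Nat.choose_succ_succ', Nat.add_mul]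
      rw [Finset.sum_congr rfl split, Finset.sum_add_distrib, ihk]
      have h3 : (∑ i ∈ range (k+1),
            (a+(i+1)).choose (i+1) * (b+(k+1-(i+1))).choose (k+1-(i+1)))
          + (a+1+0).choose 0 * (b+(k+1-0)).choose (k+1-0)
          = (a+1+b+k+1).choose (k+1) := by
        have h := ih (k+1)
        rw [Finset.sum_range_succ'] at h
        rw [show a+1+b+k+1 = a+b+(k+1)+1 from by omega, ← h]
        simp
      rw [add_assoc, h3, show a+1+b+(k+1)+1 = (a+1+b+k+1)+1 from by omega]
      exact (Nat.choose_succ_succ' (a+1+b+k+1) k).symm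

private lemma sumB (a b k : ℕ) :
    ∑ j ∈ range (k+1), k.choose j * (b+(k-j)).factorial * (a+j).factorial
      = k.factorial * a.factorial * b.factorial * (a+b+k+1).choose k := by
  rw [← convId b a k, Finset.mul_sum]
  refine Finset.sum_congr rfl fun j hj => ?_
  have hjk : j ≤ k := by simpa [Nat.lt_succ_iff] using hj
  have h1 := Nat.add_choose_mul_factorial_mul_factorial a j
  have h2 := Nat.add_choose_mul_factorial_mul_factorial b (k-j)
  have h3 := Nat.choose_mul_factorial_mul_factorial hjk
  calc k.choose j * (b+(k-j)).factorial * (a+j).factorial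
      = k.choose j * ((b+(k-j)).choose (k-j) * b.factorial * (k-j).factorial)
          * ((a+j).choose j * a.factorial * j.factorial) := by rw [← h2, ← h1]
    _ = (k.choose j * j.factorial * (k-j).factorial) * a.factorial * b.factorial
          * ((a+j).choose j * (b+(k-j)).choose (k-j)) := by ring
    _ = k.factorial * a.factorial * b.factorial
          * ((a+j).choose j * (b+(k-j)).choose (k-j)) := by rw [h3]

private lemma poch_neg (x : ℚ) (j : ℕ) : poch (-x) j = (-1)^j * fall x j := by
  induction j with
  | zero => simp [poch, fall]
  | succ j ih =>
    simp only [poch, fall, Finset.prod_range_succ] at ih ⊢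
    rw [ih, pow_succ]
    ring

private lemma poch_shift (x : ℚ) (j : ℕ) : poch x j = fall (x + j - 1) j := by
  unfold poch fall
  rw [← Finset.prod_range_reflect (fun i => x + i) j]
  refine Finset.prod_congr rfl fun i hi => ?_
  have hij : i < j := Finset.mem_range.1 hi
  have : ((j - 1 - i : ℕ) : ℚ) = (j : ℚ) - 1 - i := by
    have : j - 1 - i = j - (i + 1) := by omega
    rw [this, Nat.cast_sub (by omega)]
    push_cast; ring
  rw [this]; ring

private lemma fall_cast {m k : ℕ} (h : k ≤ m) :
    fall (m : ℚ) k = (m.descFactorial k : ℚ) := by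
  induction k with
  | zero => simp [fall]
  | succ k ih =>
    rw [fall, Finset.prod_range_succ, ← fall, ih (by omega), Nat.descFactorial_succ]
    push_cast [Nat.cast_sub (show k ≤ m by omega)]
    ring

private lemma descPos {m k : ℕ} (h : k ≤ m) : 0 < m.descFactorial k := by
  rcases Nat.eq_zero_or_pos (m.descFactorial k) with h0 | h0
  · exact absurd (Nat.descFactorial_eq_zero_iff_lt.1 h0) (by omega)
  · exact h0


/-- The alternating sum `∑_{j=0}^k (-1)^k C(k,j) k! / ((-m)_j (-n)_{k-j})` equals
`k! (m+n-k+1)_k^- / ((m)_k^- (n)_k^-)`; equivalently, via Gauss' summation,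
`C(n,k)⁻¹ ∑_{j=0}^k (-k)_j (n-k+1)_j / ((-m)_j j!)` equals the same value. -/
theorem rc_sum_eval (m n k : ℕ) (hkm : k ≤ m) (hkn : k ≤ n) :
    (∑ j ∈ Finset.range (k + 1),
        (-1 : ℚ) ^ k * (k.choose j : ℚ) * (k.factorial : ℚ) /
          (poch (-(m : ℚ)) j * poch (-(n : ℚ)) (k - j)) =
      (k.factorial : ℚ) * fall ((m : ℚ) + n - k + 1) k /
        (fall (m : ℚ) k * fall (n : ℚ) k)) ∧
    ((n.choose k : ℚ))⁻¹ *
        ∑ j ∈ Finset.range (k + 1),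
          poch (-(k : ℚ)) j * poch ((n : ℚ) - k + 1) j /
            (poch (-(m : ℚ)) j * (j.factorial : ℚ)) =
      (k.factorial : ℚ) * fall ((m : ℚ) + n - k + 1) k /
        (fall (m : ℚ) k * fall (n : ℚ) k) := by
  -- simplified form of the terms of the first sum
  have term1 : ∀ j ∈ Finset.range (k+1),
      (-1 : ℚ) ^ k * (k.choose j : ℚ) * (k.factorial : ℚ) /
          (poch (-(m : ℚ)) j * poch (-(n : ℚ)) (k - j))
        = (k.choose j : ℚ) * (k.factorial : ℚ) /
            ((m.descFactorial j : ℚ) * (n.descFactorial (k-j) : ℚ)) := by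
    intro j hj
    have hjk : j ≤ k := by simpa [Nat.lt_succ_iff] using hj
    rw [poch_neg, poch_neg, fall_cast (le_trans hjk hkm), fall_cast (le_trans (Nat.sub_le k j) hkn)]
    have hsign : ((-1:ℚ))^j * (-1)^(k-j) = (-1)^k := by
      rw [← pow_add]; congr 1; omega
    have : (-1:ℚ)^j * (m.descFactorial j : ℚ) * ((-1)^(k-j) * (n.descFactorial (k-j) : ℚ))
        = (-1)^k * ((m.descFactorial j : ℚ) * (n.descFactorial (k-j) : ℚ)) := by
      rw [← hsign]; ring
    rw [this, show (-1:ℚ)^k * (k.choose j : ℚ) * (k.factorial : ℚ)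
        = (-1:ℚ)^k * ((k.choose j : ℚ) * (k.factorial : ℚ)) from by ring,
      mul_div_mul_left _ _ (by positivity : ((-1:ℚ)^k ≠ 0))]
  -- cast facts for the RHS
  have hNb : (m:ℚ) + n - k + 1 = ((m + n - k + 1 : ℕ) : ℚ) := by
    push_cast [Nat.cast_sub (show k ≤ m + n by omega)]; ring
  have hfm : fall (m:ℚ) k = (m.descFactorial k : ℚ) := fall_cast hkm
  have hfn : fall (n:ℚ) k = (n.descFactorial k : ℚ) := fall_cast hkn
  have hfb : fall ((m:ℚ) + n - k + 1) k = ((m+n-k+1).descFactorial k : ℚ) := by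
    rw [hNb, fall_cast (show k ≤ m+n-k+1 by omega)]
  -- descFactorial of the big argument
  have hbig : (m+n-k+1).descFactorial k = k.factorial * (m+n-k+1).choose k := by
    have h1 := Nat.choose_mul_factorial_mul_factorial (show k ≤ m+n-k+1 by omega)
    have h2 := Nat.factorial_mul_descFactorial (show k ≤ m+n-k+1 by omega)
    have hpos : 0 < (m+n-k+1-k).factorial := Nat.factorial_pos _
    refine Nat.eq_of_mul_eq_mul_left hpos ?_
    calc (m+n-k+1-k).factorial * (m+n-k+1).descFactorial k
        = (m+n-k+1).factorial := h2
      _ = (m+n-k+1).choose k * k.factorial * (m+n-k+1-k).factorial := h1.symm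
      _ = (m+n-k+1-k).factorial * (k.factorial * (m+n-k+1).choose k) := by ring
  -- part 1
  have part1 : ∑ j ∈ Finset.range (k + 1),
      (-1 : ℚ) ^ k * (k.choose j : ℚ) * (k.factorial : ℚ) /
          (poch (-(m : ℚ)) j * poch (-(n : ℚ)) (k - j)) =
      (k.factorial : ℚ) * fall ((m : ℚ) + n - k + 1) k /
        (fall (m : ℚ) k * fall (n : ℚ) k) := by
    rw [Finset.sum_congr rfl term1]
    have step : ∀ j ∈ Finset.range (k+1),
        (k.choose j : ℚ) * (k.factorial : ℚ) /
            ((m.descFactorial j : ℚ) * (n.descFactorial (k-j) : ℚ))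
          = ((k.choose j * ((m-k)+(k-j)).factorial * ((n-k)+j).factorial * k.factorial : ℕ) : ℚ)
              / ((m.factorial * n.factorial : ℕ) : ℚ) := by
      intro j hj
      have hjk : j ≤ k := by simpa [Nat.lt_succ_iff] using hj
      have hd1 : 0 < m.descFactorial j := descPos (le_trans hjk hkm)
      have hd2 : 0 < n.descFactorial (k-j) := descPos (le_trans (Nat.sub_le k j) hkn)
      rw [div_eq_div_iff (by positivity) (by positivity :
        ((m.factorial * n.factorial : ℕ) : ℚ) ≠ 0)]
      have e1 : (m-j).factorial * m.descFactorial j = m.factorial :=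
        Nat.factorial_mul_descFactorial (le_trans hjk hkm)
      have e2 : (n-(k-j)).factorial * n.descFactorial (k-j) = n.factorial :=
        Nat.factorial_mul_descFactorial (le_trans (Nat.sub_le k j) hkn)
      have e3 : (m-k)+(k-j) = m - j := by omega
      have e4 : (n-k)+j = n - (k-j) := by omega
      push_cast
      rw [e3, e4]
      rw [← e1, ← e2]
      push_cast
      ring
    rw [Finset.sum_congr rfl step, ← Finset.sum_div, ← Nat.cast_sum]
    have e5 : ∑ j ∈ Finset.range (k+1),
        k.choose j * ((m-k)+(k-j)).factorial * ((n-k)+j).factorial * k.factorial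
        = (k.factorial * (n-k).factorial * (m-k).factorial * (m+n-k+1).choose k)
            * k.factorial := by
      rw [← Finset.sum_mul]
      congr 1
      have := sumB (n-k) (m-k) k
      rw [this]
      congr 2
      omega
    rw [e5, hfm, hfn, hfb, hbig]
    have hdm : 0 < m.descFactorial k := descPos hkm
    have hdn : 0 < n.descFactorial k := descPos hkn
    rw [div_eq_div_iff (by positivity : ((m.factorial * n.factorial : ℕ) : ℚ) ≠ 0)
      (by positivity)]
    have e6 : (m-k).factorial * m.descFactorial k = m.factorial :=
      Nat.factorial_mul_descFactorial hkm
    have e7 : (n-k).factorial * n.descFactorial k = n.factorial :=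
      Nat.factorial_mul_descFactorial hkn
    push_cast
    rw [← e6, ← e7]
    push_cast
    ring
  refine ⟨part1, ?_⟩
  rw [Finset.mul_sum]
  have term2 : ∀ j ∈ Finset.range (k+1),
      ((n.choose k : ℚ))⁻¹ *
          (poch (-(k : ℚ)) j * poch ((n : ℚ) - k + 1) j /
            (poch (-(m : ℚ)) j * (j.factorial : ℚ)))
        = (-1 : ℚ) ^ k * (k.choose j : ℚ) * (k.factorial : ℚ) /
            (poch (-(m : ℚ)) j * poch (-(n : ℚ)) (k - j)) := by
    intro j hj
    have hjk : j ≤ k := by simpa [Nat.lt_succ_iff] using hj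
    rw [term1 j hj, poch_neg, fall_cast hjk, poch_neg, fall_cast (le_trans hjk hkm)]
    have hpoch : poch ((n : ℚ) - k + 1) j = (((n-k)+j).descFactorial j : ℚ) := by
      rw [poch_shift]
      have : (n:ℚ) - k + 1 + j - 1 = (((n-k)+j : ℕ) : ℚ) := by
        push_cast [Nat.cast_sub hkn]; ring
      rw [this, fall_cast (Nat.le_add_left j (n-k))]
    rw [hpoch]
    have hnum : (-1:ℚ)^j * (k.descFactorial j : ℚ) * (((n-k)+j).descFactorial j : ℚ)
        / ((-1:ℚ)^j * (m.descFactorial j : ℚ) * (j.factorial : ℚ))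
        = (k.descFactorial j : ℚ) * (((n-k)+j).descFactorial j : ℚ)
          / ((m.descFactorial j : ℚ) * (j.factorial : ℚ)) := by
      rw [show (-1:ℚ)^j * (k.descFactorial j : ℚ) * (((n-k)+j).descFactorial j : ℚ)
          = (-1:ℚ)^j * ((k.descFactorial j : ℚ) * (((n-k)+j).descFactorial j : ℚ)) from by ring,
        show (-1:ℚ)^j * (m.descFactorial j : ℚ) * (j.factorial : ℚ)
          = (-1:ℚ)^j * ((m.descFactorial j : ℚ) * (j.factorial : ℚ)) from by ring,
        mul_div_mul_left _ _ (by positivity : ((-1:ℚ)^j ≠ 0))]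
    rw [hnum, inv_mul_eq_div, div_div]
    have hd1 : 0 < m.descFactorial j := descPos (le_trans hjk hkm)
    have hd2 : 0 < n.descFactorial (k-j) := descPos (le_trans (Nat.sub_le k j) hkn)
    have hc : 0 < n.choose k := Nat.choose_pos hkn
    rw [div_eq_div_iff (by positivity) (by positivity)]
    -- core nat identity
    have h1 : (k-j).factorial * k.descFactorial j = k.factorial :=
      Nat.factorial_mul_descFactorial hjk
    have h2 : (n-k).factorial * ((n-k)+j).descFactorial j = ((n-k)+j).factorial := by
      have := Nat.factorial_mul_descFactorial (Nat.le_add_left j (n-k))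
      simpa using this
    have h3 : ((n-k)+j).factorial * n.descFactorial (k-j) = n.factorial := by
      have := Nat.factorial_mul_descFactorial (le_trans (Nat.sub_le k j) hkn)
      rwa [show n - (k-j) = (n-k)+j from by omega] at this
    have h4 : n.choose k * k.factorial * (n-k).factorial = n.factorial :=
      Nat.choose_mul_factorial_mul_factorial hkn
    have h5 : k.choose j * j.factorial * (k-j).factorial = k.factorial :=
      Nat.choose_mul_factorial_mul_factorial hjk
    have core : k.descFactorial j * ((n-k)+j).descFactorial j * n.descFactorial (k-j)
        = k.choose j * k.factorial * (n.choose k * j.factorial) := by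
      have hpos : 0 < (k-j).factorial * (n-k).factorial := by positivity
      refine Nat.eq_of_mul_eq_mul_left hpos ?_
      calc ((k-j).factorial * (n-k).factorial)
            * (k.descFactorial j * ((n-k)+j).descFactorial j * n.descFactorial (k-j))
          = ((k-j).factorial * k.descFactorial j)
            * (((n-k).factorial * ((n-k)+j).descFactorial j) * n.descFactorial (k-j)) := by
              ring
        _ = k.factorial * (((n-k)+j).factorial * n.descFactorial (k-j)) := by rw [h1, h2]
        _ = k.factorial * n.factorial := by rw [h3]
        _ = (k.choose j * j.factorial * (k-j).factorial)
              * (n.choose k * k.factorial * (n-k).factorial) := by rw [h5, h4]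
        _ = ((k-j).factorial * (n-k).factorial)
              * (k.choose j * k.factorial * (n.choose k * j.factorial)) := by ring
    have coreQ : (k.descFactorial j : ℚ) * (((n-k)+j).descFactorial j : ℚ)
        * (n.descFactorial (k-j) : ℚ)
        = (k.choose j : ℚ) * (k.factorial : ℚ) * ((n.choose k : ℚ) * (j.factorial : ℚ)) := by
      exact_mod_cast congrArg (Nat.cast : ℕ → ℚ) core
    push_cast at coreQ ⊢
    linear_combination (m.descFactorial j : ℚ) * coreQ
  rw [Finset.sum_congr rfl term2, part1]
end

section
/- The coefficients d_{n,m} satisfy the three-term contiguous relation: (s + (n+m)/2 - (a-1)) d_{n,m}(s, a-1, k) + (-s - (n+m)/2 - (a+1)) d_{n,m}(s, a+1, k) = (2k + r(n,m) + a(n,m) + s) d_{n+3,m+1}(s, a, k), for all a ≡ a(n+3,m+1) mod 2 with |a| ≤ a(n+3,m+1), where a(n+3,m+1) = a(n,m)+1. -/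
/-- The coefficients `d_{n,m}(s,a,k)` from the paper, expressed in terms of
`A = a(n,m)` and `r = r(n,m)`:
`d = (-1)^{(A-a)/2-k} C(A-2k, (A-a)/2-k) Γ((1+r+s)/2+2k)Γ((1+r+s)/2+A) /
 (Γ((1+r+s)/2+k+(A-a)/2)Γ((1+r+s)/2+k+(A+a)/2))`,
where `C(x,y) = Γ(x+1)/(Γ(y+1)Γ(x-y+1))` is the generalized binomial coefficient. -/
noncomputable def dcoef (A : ℕ) (r : ℤ) (s : ℂ) (a : ℤ) (k : ℕ) : ℂ :=
  (-1 : ℂ) ^ (((A : ℤ) - a) / 2 - (k : ℤ)) *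
    (Complex.Gamma ((A : ℂ) - 2 * k + 1) /
      (Complex.Gamma (((A : ℂ) - (a : ℂ)) / 2 - k + 1) *
        Complex.Gamma ((A : ℂ) - 2 * k - (((A : ℂ) - (a : ℂ)) / 2 - k) + 1))) *
    (Complex.Gamma ((1 + (r : ℂ) + s) / 2 + 2 * k) *
        Complex.Gamma ((1 + (r : ℂ) + s) / 2 + A) /
      (Complex.Gamma ((1 + (r : ℂ) + s) / 2 + k + ((A : ℂ) - (a : ℂ)) / 2) *
        Complex.Gamma ((1 + (r : ℂ) + s) / 2 + k + ((A : ℂ) + (a : ℂ)) / 2)))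

lemma gamma_int_zero {t : ℤ} (ht : t ≤ 0) : Complex.Gamma (t : ℂ) = 0 := by
  obtain ⟨n, hn⟩ : ∃ n : ℕ, t = -(n : ℤ) := ⟨(-t).toNat, by omega⟩
  rw [hn]; push_cast; exact Complex.Gamma_neg_nat_eq_zero n

lemma gamma_shift_ne {y : ℂ} (hy : ∀ t : ℤ, y ≠ (t : ℂ)) (t : ℤ) :
    Complex.Gamma (y + (t : ℂ)) ≠ 0 := by
  refine Complex.Gamma_ne_zero fun m hm => hy (-m - t) ?_
  push_cast
  linear_combination hm

lemma gamma_fact_ne (j : ℕ) : Complex.Gamma ((j : ℂ) + 1) ≠ 0 := by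
  rw [Complex.Gamma_nat_eq_factorial]
  exact_mod_cast Nat.factorial_ne_zero j


lemma dcoef_alg3 (y c u w NN yN yP yQ G1 G2 g0 gN gN1 dP1 dP2 dQ1 dQ2 eP eP1 eQ eQ1 : ℂ)
    (hdP1 : dP1 ≠ 0) (hdQ1 : dQ1 ≠ 0) (heP : eP ≠ 0) (heQ : eQ ≠ 0)
    (hdP2n : dP2 ≠ 0) (hdQ2n : dQ2 ≠ 0) (heP1n : eP1 ≠ 0) (heQ1n : eQ1 ≠ 0)
    (hdP2 : dP2 = u * dP1) (hdQ2 : dQ2 = w * dQ1)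
    (heP1 : eP1 = yP * eP) (heQ1 : eQ1 = yQ * eQ)
    (hG2 : G2 = (NN + 1) * G1) (hgN1 : gN1 = yN * gN)
    (hNN : NN = u + w - 1) (hyP : yP = y + u - 1) (hyQ : yQ = y + w - 1)
    (hyN : yN = y + NN) :
    (2*y+3*u+w-2)*c*(G1/(dP2*dQ1))*(g0*gN/(eP1*eQ))
      + (2*y+u+3*w-2)*c*(G1/(dP1*dQ2))*(g0*gN/(eP*eQ1))
    = (2*y+u+w-2)*c*(G2/(dP2*dQ2))*(g0*gN1/(eP1*eQ1)) := by
  have h1 : (2*y+3*u+w-2)*c*(G1/(dP2*dQ1))*(g0*gN/(eP1*eQ))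
      = ((2*y+3*u+w-2)*c*G1*(g0*gN))/((dP2*dQ1)*(eP1*eQ)) := by
    ring
  have h2 : (2*y+u+3*w-2)*c*(G1/(dP1*dQ2))*(g0*gN/(eP*eQ1))
      = ((2*y+u+3*w-2)*c*G1*(g0*gN))/((dP1*dQ2)*(eP*eQ1)) := by
    ring
  have h3 : (2*y+u+w-2)*c*(G2/(dP2*dQ2))*(g0*gN1/(eP1*eQ1))
      = ((2*y+u+w-2)*c*G2*(g0*gN1))/((dP2*dQ2)*(eP1*eQ1)) := by
    ring
  rw [h1, h2, h3,
    div_add_div _ _ (mul_ne_zero (mul_ne_zero hdP2n hdQ1) (mul_ne_zero heP1n heQ))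
      (mul_ne_zero (mul_ne_zero hdP1 hdQ2n) (mul_ne_zero heP heQ1n)),
    div_eq_div_iff
      (mul_ne_zero (mul_ne_zero (mul_ne_zero hdP2n hdQ1) (mul_ne_zero heP1n heQ))
        (mul_ne_zero (mul_ne_zero hdP1 hdQ2n) (mul_ne_zero heP heQ1n)))
      (mul_ne_zero (mul_ne_zero hdP2n hdQ2n) (mul_ne_zero heP1n heQ1n))]
  subst hdP2 hdQ2 heP1 heQ1 hG2 hgN1 hNN hyN hyP hyQ
  ring

set_option maxHeartbeats 1000000 in
lemma dcoef_aux (y : ℂ) (hy : ∀ t : ℤ, y ≠ (t : ℂ)) (N : ℕ) (p q : ℤ)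
    (hpq : p + q = (N : ℤ)) (c : ℂ) :
    (2*y + 3*(p:ℂ) + (q:ℂ) - 1) * c *
      (Complex.Gamma ((N:ℂ)+1) / (Complex.Gamma ((p:ℂ)+1) * Complex.Gamma ((q:ℂ)+1))) *
      (Complex.Gamma y * Complex.Gamma (y+(N:ℂ)) /
        (Complex.Gamma (y+(p:ℂ)) * Complex.Gamma (y+(q:ℂ))))
    + (2*y + (p:ℂ) + 3*(q:ℂ) + 1) * c *
      (Complex.Gamma ((N:ℂ)+1) / (Complex.Gamma ((p:ℂ)) * Complex.Gamma ((q:ℂ)+2))) *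
      (Complex.Gamma y * Complex.Gamma (y+(N:ℂ)) /
        (Complex.Gamma (y+(p:ℂ)-1) * Complex.Gamma (y+(q:ℂ)+1)))
    = (2*y + (p:ℂ) + (q:ℂ) - 1) * c *
      (Complex.Gamma ((N:ℂ)+2) / (Complex.Gamma ((p:ℂ)+1) * Complex.Gamma ((q:ℂ)+2))) *
      (Complex.Gamma y * Complex.Gamma (y+(N:ℂ)+1) /
        (Complex.Gamma (y+(p:ℂ)) * Complex.Gamma (y+(q:ℂ)+1))) := by
  have hGy : Complex.Gamma y ≠ 0 := by
    have := gamma_shift_ne hy 0; simpa using this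
  have hy0 : ∀ t : ℤ, y + (t : ℂ) ≠ 0 := by
    intro t h
    exact hy (-t) (by push_cast; linear_combination h)
  rcases lt_trichotomy p 0 with hp | hp | hp
  · -- p ≤ -1 : everything vanishes
    have h1 : Complex.Gamma ((p:ℂ)+1) = 0 := by
      rw [show (p:ℂ)+1 = ((p+1 : ℤ):ℂ) by push_cast; ring]
      exact gamma_int_zero (by omega)
    have h2 : Complex.Gamma ((p:ℂ)) = 0 := gamma_int_zero (by omega)
    simp [h1, h2]
  · -- p = 0, q = N
    subst hp
    have hqN : (q:ℂ) = (N:ℂ) := by exact_mod_cast congrArg (Int.cast : ℤ → ℂ) (by omega : q = (N:ℤ))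
    rw [hqN]
    simp only [Int.cast_zero, Complex.Gamma_zero]
    have h1 : Complex.Gamma ((0:ℂ)+1) = 1 := by norm_num [Complex.Gamma_one]
    have hN1 : Complex.Gamma ((N:ℂ)+1) ≠ 0 := gamma_fact_ne N
    have hN2 : Complex.Gamma ((N:ℂ)+2) ≠ 0 := by
      have := gamma_fact_ne (N+1); push_cast at this; convert this using 2; ring
    have hyN : Complex.Gamma (y + (N:ℂ)) ≠ 0 := by
      have := gamma_shift_ne hy N; simpa using this
    have hyN1 : Complex.Gamma (y + (N:ℂ) + 1) ≠ 0 := by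
      have := gamma_shift_ne hy (N+1); push_cast at this
      rw [show y + (N:ℂ) + 1 = y + ((N:ℂ)+1) by ring]; exact this
    rw [show y + (0:ℂ) = y by ring]
    simp only [zero_mul, mul_zero, div_zero, add_zero, zero_add, Complex.Gamma_one]
    field_simp
  · -- p ≥ 1
    rcases lt_trichotomy q (-1) with hq | hq | hq
    · -- q ≤ -2 : everything vanishes
      have h1 : Complex.Gamma ((q:ℂ)+1) = 0 := by
        rw [show (q:ℂ)+1 = ((q+1 : ℤ):ℂ) by push_cast; ring]
        exact gamma_int_zero (by omega)
      have h2 : Complex.Gamma ((q:ℂ)+2) = 0 := by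
        rw [show (q:ℂ)+2 = ((q+2 : ℤ):ℂ) by push_cast; ring]
        exact gamma_int_zero (by omega)
      simp [h1, h2]
    · -- q = -1, p = N+1
      subst hq
      have hpN : (p:ℂ) = (N:ℂ) + 1 := by exact_mod_cast congrArg (Int.cast : ℤ → ℂ) (by omega : p = (N:ℤ)+1)
      rw [hpN]
      have h0 : Complex.Gamma (((-1:ℤ):ℂ)+1) = 0 := by norm_num [Complex.Gamma_zero]
      have hN1 : Complex.Gamma ((N:ℂ)+1) ≠ 0 := gamma_fact_ne N
      have hN2 : Complex.Gamma ((N:ℂ)+1+1) ≠ 0 := by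
        have := gamma_fact_ne (N+1); push_cast at this; convert this using 2
      have hyN : Complex.Gamma (y + (N:ℂ)) ≠ 0 := by
        have := gamma_shift_ne hy N; simpa using this
      have hyN1 : Complex.Gamma (y + ((N:ℂ)+1)) ≠ 0 := by
        have := gamma_shift_ne hy (N+1); push_cast at this; exact this
      rw [show y + ((N:ℂ)+1) - 1 = y + (N:ℂ) by ring,
          show y + ((-1:ℤ):ℂ) + 1 = y by push_cast; ring,
          show (((-1:ℤ):ℂ)) + 2 = (0:ℂ) + 1 by push_cast; ring,
          show y + (N:ℂ) + 1 = y + ((N:ℂ)+1) by ring,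
          show (N:ℂ)+2 = (N:ℂ)+1+1 by ring]
      rw [Complex.Gamma_add_one ((N:ℂ)+1) (by exact_mod_cast Nat.succ_ne_zero N)] at hN2 ⊢
      simp only [h0, Complex.Gamma_zero, zero_mul, mul_zero, zero_div, div_zero, add_zero, zero_add, Complex.Gamma_one, mul_one, one_mul]
      field_simp
      ring
    · -- q ≥ 0, p ≥ 1 : main case
      obtain ⟨P, rfl⟩ : ∃ P : ℕ, p = (P:ℤ)+1 := ⟨(p-1).toNat, by omega⟩
      obtain ⟨Q, rfl⟩ : ∃ Q : ℕ, q = (Q:ℤ) := ⟨q.toNat, by omega⟩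
      have hN : (N:ℂ) = (P:ℂ)+(Q:ℂ)+1 := by
        exact_mod_cast congrArg (Int.cast : ℤ → ℂ) (by omega : (N:ℤ) = (P:ℤ)+(Q:ℤ)+1)
      push_cast
      rw [show y + ((P:ℂ)+1) = y + (P:ℂ) + 1 from by ring]
      have hP1 : ((P:ℂ)+1) ≠ 0 := by exact_mod_cast Nat.succ_ne_zero P
      have hQ1 : ((Q:ℂ)+1) ≠ 0 := by exact_mod_cast Nat.succ_ne_zero Q
      have GP1 : Complex.Gamma ((P:ℂ)+1) ≠ 0 := gamma_fact_ne P
      have GQ1 : Complex.Gamma ((Q:ℂ)+1) ≠ 0 := gamma_fact_ne Q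
      have GP2 : Complex.Gamma ((P:ℂ)+1+1) ≠ 0 := by
        have := gamma_fact_ne (P+1); push_cast at this
        rw [show (P:ℂ)+1+1 = (P:ℂ)+1+1 from rfl]; exact this
      have GQ2 : Complex.Gamma ((Q:ℂ)+2) ≠ 0 := by
        have := gamma_fact_ne (Q+1); push_cast at this
        rw [show (Q:ℂ)+2 = (Q:ℂ)+1+1 by ring]; exact this
      have GyP : Complex.Gamma (y+(P:ℂ)+1-1) ≠ 0 := by
        have := gamma_shift_ne hy P
        rw [show y+(P:ℂ)+1-1 = y+(P:ℂ) by ring]; exact this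
      have GyQ : Complex.Gamma (y+(Q:ℂ)) ≠ 0 := gamma_shift_ne hy Q
      have GyP1 : Complex.Gamma (y+(P:ℂ)+1) ≠ 0 := by
        have := gamma_shift_ne hy (P+1); push_cast at this
        rw [show y + ((P:ℂ)+1) = y + (P:ℂ) + 1 from by ring] at this; exact this
      have GyQ1 : Complex.Gamma (y+(Q:ℂ)+1) ≠ 0 := by
        have := gamma_shift_ne hy (Q+1); push_cast at this
        rw [show y+(Q:ℂ)+1 = y+((Q:ℂ)+1) by ring]; exact this
      have hdP2 : Complex.Gamma ((P:ℂ)+1+1) = ((P:ℂ)+1) * Complex.Gamma ((P:ℂ)+1) :=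
        Complex.Gamma_add_one _ hP1
      have hdQ2 : Complex.Gamma ((Q:ℂ)+2) = ((Q:ℂ)+1) * Complex.Gamma ((Q:ℂ)+1) := by
        rw [show (Q:ℂ)+2 = (Q:ℂ)+1+1 by ring]; exact Complex.Gamma_add_one _ hQ1
      have heP1 : Complex.Gamma (y+(P:ℂ)+1) = (y+(P:ℂ)) * Complex.Gamma (y+(P:ℂ)+1-1) := by
        rw [show y+(P:ℂ)+1 = (y+(P:ℂ))+1 by ring, show y+(P:ℂ)+1-1 = y+(P:ℂ) by ring]
        exact Complex.Gamma_add_one _ (hy0 P)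
      have heQ1 : Complex.Gamma (y+(Q:ℂ)+1) = (y+(Q:ℂ)) * Complex.Gamma (y+(Q:ℂ)) := by
        rw [show y+(Q:ℂ)+1 = (y+(Q:ℂ))+1 by ring]; exact Complex.Gamma_add_one _ (hy0 Q)
      have hG2 : Complex.Gamma ((N:ℂ)+2) = ((N:ℂ)+1) * Complex.Gamma ((N:ℂ)+1) := by
        rw [show (N:ℂ)+2 = (N:ℂ)+1+1 by ring]
        exact Complex.Gamma_add_one _ (by exact_mod_cast Nat.succ_ne_zero N)
      have hgN1 : Complex.Gamma (y+(N:ℂ)+1) = (y+(N:ℂ)) * Complex.Gamma (y+(N:ℂ)) := by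
        rw [show y+(N:ℂ)+1 = (y+(N:ℂ))+1 by ring]; exact Complex.Gamma_add_one _ (hy0 N)
      linear_combination dcoef_alg3 y c ((P:ℂ)+1) ((Q:ℂ)+1) (N:ℂ) (y+(N:ℂ)) (y+(P:ℂ)) (y+(Q:ℂ))
        (Complex.Gamma ((N:ℂ)+1)) (Complex.Gamma ((N:ℂ)+2)) (Complex.Gamma y)
        (Complex.Gamma (y+(N:ℂ))) (Complex.Gamma (y+(N:ℂ)+1))
        (Complex.Gamma ((P:ℂ)+1)) (Complex.Gamma ((P:ℂ)+1+1))
        (Complex.Gamma ((Q:ℂ)+1)) (Complex.Gamma ((Q:ℂ)+2))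
        (Complex.Gamma (y+(P:ℂ)+1-1)) (Complex.Gamma (y+(P:ℂ)+1))
        (Complex.Gamma (y+(Q:ℂ))) (Complex.Gamma (y+(Q:ℂ)+1))
        GP1 GQ1 GyP GyQ GP2 GQ2 GyP1 GyQ1
        hdP2 hdQ2 heP1 heQ1 hG2 hgN1
        (by rw [hN]; ring) (by ring) (by ring) rfl

/-- The three-term contiguous relation
`(s + (n+m)/2 - (a-1)) d_{n,m}(s,a-1,k) + (-s - (n+m)/2 - (a+1)) d_{n,m}(s,a+1,k)
  = (2k + r(n,m) + a(n,m) + s) d_{n+3,m+1}(s,a,k)`,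
for `a ≡ a(n+3,m+1) (mod 2)` with `|a| ≤ a(n+3,m+1) = a(n,m) + 1`; here
`r(n+3,m+1) = r(n,m)` so `d_{n+3,m+1}` is `dcoef (A+1) r`. -/
theorem dcoef_contiguous (n m A : ℕ) (hnm : n % 2 = m % 2)
    (hA : (A : ℤ) + 1 = (((Finset.Icc (-(m : ℤ)) (m : ℤ)).filter
        (fun a => 3 * |a| ≤ (n : ℤ) ∧ a % 2 = (n : ℤ) % 2)).card : ℤ))
    (r : ℤ) (hr : r = ((n : ℤ) + m) / 2 - 2 * A)
    (s : ℂ) (hs : ∀ t : ℤ, (1 + (r : ℂ) + s) / 2 ≠ (t : ℂ))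
    (k : ℕ) (hk : 2 * k ≤ A)
    (a : ℤ) (hpar : a % 2 = ((A : ℤ) + 1) % 2) (ha : |a| ≤ (A : ℤ) + 1) :
    (s + ((n : ℂ) + m) / 2 - ((a : ℂ) - 1)) * dcoef A r s (a - 1) k +
      (-s - ((n : ℂ) + m) / 2 - ((a : ℂ) + 1)) * dcoef A r s (a + 1) k =
    (2 * k + (r : ℂ) + A + s) * dcoef (A + 1) r s a k := by
  obtain ⟨e, he⟩ : ∃ e : ℤ, a = (A : ℤ) + 1 - 2 * e := ⟨((A:ℤ)+1-a)/2, by omega⟩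
  subst he
  have h2 : ((n:ℤ) + (m:ℤ)) = 2*(r + 2*(A:ℤ)) := by omega
  have hC : ((n:ℂ) + (m:ℂ))/2 = (r:ℂ) + 2*(A:ℂ) := by
    have := congrArg (Int.cast : ℤ → ℂ) h2
    push_cast at this
    linear_combination this / 2
  have hy : ∀ t : ℤ, ((1 + (r:ℂ) + s)/2 + 2*(k:ℂ)) ≠ (t:ℂ) := by
    intro t h
    exact hs (t - 2*k) (by push_cast; linear_combination h)
  have key := dcoef_aux ((1 + (r:ℂ) + s)/2 + 2*(k:ℂ)) hy (A - 2*k) ((e:ℤ) - k) ((A:ℤ) - k - e)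
    (by push_cast [Nat.cast_sub hk]; ring) ((-1:ℂ)^((e:ℤ) - k))
  rw [Nat.cast_sub hk] at key
  push_cast at key
  simp only [dcoef]
  push_cast
  rw [hC]
  rw [show ((A:ℤ) - ((A:ℤ) + 1 - 2 * e - 1)) / 2 - (k:ℤ) = e - (k:ℤ) from by omega,
      show ((A:ℤ) - ((A:ℤ) + 1 - 2 * e + 1)) / 2 - (k:ℤ) = e - (k:ℤ) - 1 from by omega,
      show ((A:ℤ) + 1 - ((A:ℤ) + 1 - 2 * e)) / 2 - (k:ℤ) = e - (k:ℤ) from by omega,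
      zpow_sub_one₀ (by norm_num : (-1:ℂ) ≠ 0)]
  rw [show ((A:ℂ) - ((A:ℂ) + 1 - 2 * (e:ℂ) - 1)) / 2 - (k:ℂ) + 1 = (e:ℂ) - (k:ℂ) + 1 from by ring,
      show (A:ℂ) - 2 * (k:ℂ) - (((A:ℂ) - ((A:ℂ) + 1 - 2 * (e:ℂ) - 1)) / 2 - (k:ℂ)) + 1
        = (A:ℂ) - (k:ℂ) - (e:ℂ) + 1 from by ring,
      show (1 + (r:ℂ) + s) / 2 + (A:ℂ)
        = (1 + (r:ℂ) + s) / 2 + 2 * (k:ℂ) + ((A:ℂ) - 2 * (k:ℂ)) from by ring,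
      show (1 + (r:ℂ) + s) / 2 + (k:ℂ) + ((A:ℂ) - ((A:ℂ) + 1 - 2 * (e:ℂ) - 1)) / 2
        = (1 + (r:ℂ) + s) / 2 + 2 * (k:ℂ) + ((e:ℂ) - (k:ℂ)) from by ring,
      show (1 + (r:ℂ) + s) / 2 + (k:ℂ) + ((A:ℂ) + ((A:ℂ) + 1 - 2 * (e:ℂ) - 1)) / 2
        = (1 + (r:ℂ) + s) / 2 + 2 * (k:ℂ) + ((A:ℂ) - (k:ℂ) - (e:ℂ)) from by ring,
      show ((A:ℂ) - ((A:ℂ) + 1 - 2 * (e:ℂ) + 1)) / 2 - (k:ℂ) + 1 = (e:ℂ) - (k:ℂ) from by ring,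
      show (A:ℂ) - 2 * (k:ℂ) - (((A:ℂ) - ((A:ℂ) + 1 - 2 * (e:ℂ) + 1)) / 2 - (k:ℂ)) + 1
        = (A:ℂ) - (k:ℂ) - (e:ℂ) + 2 from by ring,
      show (1 + (r:ℂ) + s) / 2 + (k:ℂ) + ((A:ℂ) - ((A:ℂ) + 1 - 2 * (e:ℂ) + 1)) / 2
        = (1 + (r:ℂ) + s) / 2 + 2 * (k:ℂ) + ((e:ℂ) - (k:ℂ)) - 1 from by ring,
      show (1 + (r:ℂ) + s) / 2 + (k:ℂ) + ((A:ℂ) + ((A:ℂ) + 1 - 2 * (e:ℂ) + 1)) / 2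
        = (1 + (r:ℂ) + s) / 2 + 2 * (k:ℂ) + ((A:ℂ) - (k:ℂ) - (e:ℂ)) + 1 from by ring,
      show (A:ℂ) + 1 - 2 * (k:ℂ) + 1 = (A:ℂ) - 2 * (k:ℂ) + 2 from by ring,
      show ((A:ℂ) + 1 - ((A:ℂ) + 1 - 2 * (e:ℂ))) / 2 - (k:ℂ) + 1 = (e:ℂ) - (k:ℂ) + 1 from by ring,
      show (A:ℂ) + 1 - 2 * (k:ℂ) - (((A:ℂ) + 1 - ((A:ℂ) + 1 - 2 * (e:ℂ))) / 2 - (k:ℂ)) + 1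
        = (A:ℂ) - (k:ℂ) - (e:ℂ) + 2 from by ring,
      show (1 + (r:ℂ) + s) / 2 + ((A:ℂ) + 1)
        = (1 + (r:ℂ) + s) / 2 + 2 * (k:ℂ) + ((A:ℂ) - 2 * (k:ℂ)) + 1 from by ring,
      show (1 + (r:ℂ) + s) / 2 + (k:ℂ) + ((A:ℂ) + 1 - ((A:ℂ) + 1 - 2 * (e:ℂ))) / 2
        = (1 + (r:ℂ) + s) / 2 + 2 * (k:ℂ) + ((e:ℂ) - (k:ℂ)) from by ring,
      show (1 + (r:ℂ) + s) / 2 + (k:ℂ) + ((A:ℂ) + 1 + ((A:ℂ) + 1 - 2 * (e:ℂ))) / 2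
        = (1 + (r:ℂ) + s) / 2 + 2 * (k:ℂ) + ((A:ℂ) - (k:ℂ) - (e:ℂ)) + 1 from by ring]
  linear_combination key
end
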